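/- Let φ be a propositional formula, λ an LP_m interpretation, r a variable not occurring in φ, and o a variable occurrence in φ; φ[o/r] denotes φ with occurrence o replaced by r. Then: (1) if o is a positive occurrence and 1∈λ(φ), then 1∈λ_{r↦{1}}(φ[o/r]); (2) if o is a negative occurrence and 0∈λ(φ), then 0∈λ_{r↦{1}}(φ[o/r]); (3) if o is a negative occurrence and 1∈λ(φ), then 1∈λ_{r↦{0}}(φ[o/r]); (4) if o is a positive occurrence and 0∈λ(φ), then 0∈λ_{r↦{0}}(φ[o/r]). Here λ_{r↦V} agrees with λ except that it assigns V to r. -/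
import Mathlib


namespace Occ

/-- Propositional formulas over variables indexed by `ℕ`,
built from variables using negation and conjunction. -/
inductive Form : Type where
  | var : ℕ → Form
  | neg : Form → Form
  | conj : Form → Form → Form
deriving DecidableEq

/-- Boolean evaluation of a formula under an interpretation `w`. -/
def eval (w : ℕ → Bool) : Form → Bool
  | .var p => w p
  | .neg φ => !(eval w φ)
  | .conj φ ψ => eval w φ && eval w ψ

/-- The variables occurring in a formula. -/
def vars : Form → Finset ℕ
  | .var p => {p}
  | .neg φ => vars φ
  | .conj φ ψ => vars φ ∪ vars ψ

/-- A step in a path addressing a subformula occurrence. -/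
inductive Step : Type where
  | neg | left | right
deriving DecidableEq

/-- `occAt φ l pol = some (p, pol')` iff the path `l` addresses an occurrence of the
variable `p` in `φ`, and this occurrence has polarity `pol'` (`true` = positive)
when the ambient polarity of `φ` is `pol`. -/
def occAt : Form → List Step → Bool → Option (ℕ × Bool)
  | .var p, [], pol => some (p, pol)
  | .neg φ, .neg :: l, pol => occAt φ l (!pol)
  | .conj φ _, .left :: l, pol => occAt φ l pol
  | .conj _ ψ, .right :: l, pol => occAt ψ l pol
  | _, _, _ => none

/-- A variable occurrence in a base: a formula together with a path into it. -/
abbrev Occurrence : Type := Form × List Step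

/-- A propositional base: a finite set of formulas. -/
abbrev PB : Type := Finset Form

/-- `o` is a variable occurrence in the base `K`. -/
def IsOcc (K : PB) (o : Occurrence) : Prop :=
  o.1 ∈ K ∧ ∃ p pol, occAt o.1 o.2 true = some (p, pol)

/-- `o` is an occurrence of the variable `p` in `K`, of polarity `pol`. -/
def IsOccOf (K : PB) (o : Occurrence) (p : ℕ) (pol : Bool) : Prop :=
  o.1 ∈ K ∧ occAt o.1 o.2 true = some (p, pol)

/-- `o` is an occurrence of the variable `p` in `K`. -/
def IsOccVar (K : PB) (o : Occurrence) (p : ℕ) : Prop :=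
  ∃ pol, IsOccOf K o p pol

/-- `o` is a positive variable occurrence in `K`. -/
def IsPosOcc (K : PB) (o : Occurrence) : Prop := ∃ p, IsOccOf K o p true

/-- `o` is a negative variable occurrence in `K`. -/
def IsNegOcc (K : PB) (o : Occurrence) : Prop := ∃ p, IsOccOf K o p false

/-- `o` and `o'` are occurrences of the same variable. -/
def sameVar (o o' : Occurrence) : Prop :=
  ∃ p pol pol', occAt o.1 o.2 true = some (p, pol) ∧ occAt o'.1 o'.2 true = some (p, pol')

/-- The variables occurring in a base. -/
def varsPB (K : PB) : Finset ℕ := K.sup vars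

/-- `w` is a (Boolean) model of the base `K` (i.e. of the conjunction of its formulas). -/
def modelsPB (w : ℕ → Bool) (K : PB) : Prop := ∀ φ ∈ K, eval w φ = true

/-- A base is consistent iff the conjunction of its formulas has a model. -/
def ConsistentPB (K : PB) : Prop := ∃ w, modelsPB w K

/-- Classical entailment from a base. -/
def Entails (K : PB) (φ : Form) : Prop := ∀ w, modelsPB w K → eval w φ = true

/-- Rename every variable occurrence of a formula, the new variable of the
occurrence at path `l` being `f l`. -/
def renameBy : (List Step → ℕ) → Form → Form
  | f, .var _ => .var (f [])
  | f, .neg φ => .neg (renameBy (fun l => f (.neg :: l)) φ)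
  | f, .conj φ ψ =>
      .conj (renameBy (fun l => f (.left :: l)) φ) (renameBy (fun l => f (.right :: l)) ψ)

/-- The formula `φ` (viewed as a member of a base) with each occurrence `o`
replaced by the variable `R o`. -/
def renameForm (R : Occurrence → ℕ) (φ : Form) : Form :=
  renameBy (fun l => R (φ, l)) φ

/-- A C-renaming of `K`: it assigns a pairwise distinct fresh variable to each
occurrence of `K`. -/
structure IsCRenaming (K : PB) (R : Occurrence → ℕ) : Prop where
  fresh : ∀ o, IsOcc K o → R o ∉ varsPB K
  inj : ∀ o o', IsOcc K o → IsOcc K o' → R o = R o' → o = o'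

/-- Binary relations on occurrences, viewed as sets of ordered pairs. -/
abbrev Rel : Type := Set (Occurrence × Occurrence)

/-- `r` is an equivalence relation on `Occ(K)`. -/
structure IsEquivOn (K : PB) (r : Rel) : Prop where
  dom : ∀ q ∈ r, IsOcc K q.1 ∧ IsOcc K q.2
  refl : ∀ o, IsOcc K o → (o, o) ∈ r
  symm : ∀ q ∈ r, (q.2, q.1) ∈ r
  trans : ∀ a b c : Occurrence, (a, b) ∈ r → (b, c) ∈ r → (a, c) ∈ r

/-- Compliance: related occurrences are occurrences of the same variable. -/
def Compliant (r : Rel) : Prop := ∀ q ∈ r, sameVar q.1 q.2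

/-- Consistency of the formula `⋀R(K) ∧ ⋀_{(o,o')∈r} (R(o) ↔ R(o'))`. -/
def RelConsistent (K : PB) (R : Occurrence → ℕ) (r : Rel) : Prop :=
  ∃ w : ℕ → Bool, (∀ φ ∈ K, eval w (renameForm R φ) = true) ∧
    ∀ q ∈ r, w (R q.1) = w (R q.2)

/-- Minimal Inconsistency Relation of `K` (w.r.t. the C-renaming `R`). -/
def IsMIR (K : PB) (R : Occurrence → ℕ) (r : Rel) : Prop :=
  IsEquivOn K r ∧ Compliant r ∧ ¬ RelConsistent K R r ∧
    ∀ r', IsEquivOn K r' → Compliant r' → ¬ RelConsistent K R r' → ¬ r' ⊂ r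

/-- Maximal Consistency Relation of `K` (w.r.t. the C-renaming `R`). -/
def IsMCR (K : PB) (R : Occurrence → ℕ) (r : Rel) : Prop :=
  IsEquivOn K r ∧ Compliant r ∧ RelConsistent K R r ∧
    ∀ r', IsEquivOn K r' → Compliant r' → RelConsistent K R r' → ¬ r ⊂ r'

/-- The relation `∼_c^K`: relating occurrences of `K` of the same variable. -/
def sameVarRel (K : PB) : Rel :=
  {q | IsOcc K q.1 ∧ IsOcc K q.2 ∧ sameVar q.1 q.2}

/-- `PN(r)`: related pairs consisting of a positive and a negative occurrence. -/
def PN (K : PB) (r : Rel) : Rel :=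
  {q | q ∈ r ∧ IsPosOcc K q.1 ∧ IsNegOcc K q.2}

/-- A BMCR: an MCR satisfying Maximality-2. -/
def IsBMCR (K : PB) (R : Occurrence → ℕ) (r : Rel) : Prop :=
  IsMCR K R r ∧
    ∀ r', IsEquivOn K r' → Compliant r' → RelConsistent K R r' → ¬ PN K r ⊂ PN K r'

/-- `H` is a hitting set of the collection `S`. -/
def IsHittingSet {α : Type} (S : Set (Set α)) (H : Set α) : Prop :=
  ∀ s ∈ S, (s ∩ H).Nonempty

/-- `H` is a minimal hitting set of the collection `S`. -/
def IsMinHittingSet {α : Type} (S : Set (Set α)) (H : Set α) : Prop :=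
  IsHittingSet S H ∧ ∀ H', H' ⊂ H → ¬ IsHittingSet S H'

/-- `r` is `H`-maximal (for an equivalence relation `r ⊆ ∼_c^K`). -/
def IsHMaximal (K : PB) (H r : Rel) : Prop :=
  r ∩ H = ∅ ∧
    ∀ r', IsEquivOn K r' → r' ⊆ sameVarRel K → r ⊂ r' → (r' ∩ H).Nonempty

/-- `r` is `H`-minimal (for an equivalence relation `r ⊆ ∼_c^K`). -/
def IsHMinimal (K : PB) (H r : Rel) : Prop :=
  H ⊆ r ∧ ∀ r', IsEquivOn K r' → r' ⊂ r → ¬ H ⊆ r'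

/-- The set of all MIRs of `K`. -/
def MIRs (K : PB) (R : Occurrence → ℕ) : Set Rel := {r | IsMIR K R r}

/-- The set of all C-MCRs of `K`: relations `θ ⊆ ∼_c^K` with `∼_c^K ∖ θ` an MCR. -/
def CMCRs (K : PB) (R : Occurrence → ℕ) : Set Rel :=
  {θ | θ ⊆ sameVarRel K ∧ IsMCR K R (sameVarRel K \ θ)}

/-- `ρ` is a `∼`-renaming for the equivalence relation `r` on `Occ(K)`:
it assigns a distinct variable to each equivalence class (so it is constant on
classes and distinguishes distinct classes), and any class containing all the
occurrences of a variable `p` is mapped to `p` itself. -/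
def IsClassRenaming (K : PB) (r : Rel) (ρ : Occurrence → ℕ) : Prop :=
  (∀ o o', IsOcc K o → IsOcc K o' → (ρ o = ρ o' ↔ (o, o') ∈ r)) ∧
    (∀ o p, IsOccVar K o p → (∀ o', IsOccVar K o' p → (o, o') ∈ r) → ρ o = p)

/-- `σ` encodes a tuple `(q₁,…,q_m) ∈ P(ρ_∼, S)` where `S = (p₁,…,p_m)`
enumerates `var(K) ∩ var(φ)`: it maps each shared variable `p` to a member of
`⌈ρ⌉(p)` and is the identity elsewhere. -/
def IsTupleChoice (K : PB) (φ : Form) (ρ : Occurrence → ℕ) (σ : ℕ → ℕ) : Prop :=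
  (∀ p, p ∈ varsPB K → p ∈ vars φ → ∃ o, IsOccVar K o p ∧ σ p = ρ o) ∧
    (∀ p, ¬ (p ∈ varsPB K ∧ p ∈ vars φ) → σ p = p)

/-- Simultaneous substitution of variables by variables. -/
def substV (σ : ℕ → ℕ) : Form → Form
  | .var p => .var (σ p)
  | .neg φ => .neg (substV σ φ)
  | .conj φ ψ => .conj (substV σ φ) (substV σ ψ)

/-- `ρ_∼(K) ⊢ ψ`. -/
def rhoEntails (K : PB) (ρ : Occurrence → ℕ) (ψ : Form) : Prop :=
  ∀ w : ℕ → Bool, (∀ φ ∈ K, eval w (renameForm ρ φ) = true) → eval w ψ = true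

/-- The inference relation `K ⊩₁ φ`. -/
def Inf1 (K : PB) (R : Occurrence → ℕ) (φ : Form) : Prop :=
  ∀ r ρ, IsMCR K R r → IsClassRenaming K r ρ →
    ∃ σ, IsTupleChoice K φ ρ σ ∧ rhoEntails K ρ (substV σ φ)

/-- The inference relation `K ⊩₂ φ`. -/
def Inf2 (K : PB) (R : Occurrence → ℕ) (φ : Form) : Prop :=
  ∀ r ρ, IsMCR K R r → IsClassRenaming K r ρ →
    ∀ σ, IsTupleChoice K φ ρ σ → rhoEntails K ρ (substV σ φ)

/-- The inference relation `K ⊩₁^B φ`. -/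
def Inf1B (K : PB) (R : Occurrence → ℕ) (φ : Form) : Prop :=
  ∀ r ρ, IsBMCR K R r → IsClassRenaming K r ρ →
    ∃ σ, IsTupleChoice K φ ρ σ ∧ rhoEntails K ρ (substV σ φ)

/-- The inference relation `K ⊩₂^B φ`. -/
def Inf2B (K : PB) (R : Occurrence → ℕ) (φ : Form) : Prop :=
  ∀ r ρ, IsBMCR K R r → IsClassRenaming K r ρ →
    ∀ σ, IsTupleChoice K φ ρ σ → rhoEntails K ρ (substV σ φ)

/-- `μ` is an o-model of `K`: any interpretation `w` with `w (R o) = μ o` for all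
occurrences `o` of `K` is a model of `⋀R(K)`. -/
def OModel (K : PB) (R : Occurrence → ℕ) (μ : Occurrence → Bool) : Prop :=
  ∀ w : ℕ → Bool, (∀ o, IsOcc K o → w (R o) = μ o) →
    ∀ φ ∈ K, eval w (renameForm R φ) = true

/-- `diff_a(μ)`: pairs of occurrences of the same variable on which `μ` differs. -/
def diffA (K : PB) (μ : Occurrence → Bool) : Rel :=
  {q | IsOcc K q.1 ∧ IsOcc K q.2 ∧ sameVar q.1 q.2 ∧ μ q.1 ≠ μ q.2}

/-- `μ` is an a-minimal o-model of `K`. -/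
def AMinOModel (K : PB) (R : Occurrence → ℕ) (μ : Occurrence → Bool) : Prop :=
  OModel K R μ ∧ ∀ μ', OModel K R μ' → ¬ diffA K μ' ⊂ diffA K μ

/-- A Boolean interpretation `w` is compatible with an o-interpretation `μ`. -/
def Compatible (K : PB) (μ : Occurrence → Bool) (w : ℕ → Bool) : Prop :=
  ∀ p ∈ varsPB K, ∃ o, IsOccVar K o p ∧ w p = μ o

/-- The inference relation `K ⊩_{a1} φ`. -/
def InfA1 (K : PB) (R : Occurrence → ℕ) (φ : Form) : Prop :=
  ∀ μ, AMinOModel K R μ → ∃ w, Compatible K μ w ∧ eval w φ = true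

/-- The inference relation `K ⊩_{a2} φ`. -/
def InfA2 (K : PB) (R : Occurrence → ℕ) (φ : Form) : Prop :=
  ∀ μ, AMinOModel K R μ → ∀ w, Compatible K μ w → eval w φ = true

/-- LP_m evaluation: an LP_m interpretation assigns a (nonempty) set of truth
values to each variable; it extends to formulas pointwise. -/
def lpEval (lam : ℕ → Set Bool) : Form → Set Bool
  | .var p => lam p
  | .neg φ => (fun v => !v) '' lpEval lam φ
  | .conj φ ψ => Set.image2 (· && ·) (lpEval lam φ) (lpEval lam ψ)

/-- `lam` is an LP_m interpretation: each variable gets a nonempty set of values. -/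
def IsLPInterp (lam : ℕ → Set Bool) : Prop := ∀ p, (lam p).Nonempty

/-- `lam` is an LP_m model of `⋀K`. -/
def LPModelPB (lam : ℕ → Set Bool) (K : PB) : Prop := ∀ φ ∈ K, true ∈ lpEval lam φ

/-- `λ! = {p : λ(p) = {0,1}}`. -/
def lpBang (lam : ℕ → Set Bool) : Set ℕ := {p | lam p = Set.univ}

/-- `lam` is a minimal LP_m model of `⋀K`. -/
def MinLPModelPB (K : PB) (lam : ℕ → Set Bool) : Prop :=
  IsLPInterp lam ∧ LPModelPB lam K ∧
    ∀ lam', IsLPInterp lam' → LPModelPB lam' K → ¬ lpBang lam' ⊂ lpBang lam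

/-- `K ⊢_{LPm} φ`. -/
def LPmEntails (K : PB) (φ : Form) : Prop :=
  ∀ lam, MinLPModelPB K lam → true ∈ lpEval lam φ

/-- Replace the subformula occurrence of `φ` addressed by the path `l` by `ψ`. -/
def replaceAt : Form → List Step → Form → Form
  | _, [], ψ => ψ
  | .neg φ, .neg :: l, ψ => .neg (replaceAt φ l ψ)
  | .conj φ χ, .left :: l, ψ => .conj (replaceAt φ l ψ) χ
  | .conj φ χ, .right :: l, ψ => .conj φ (replaceAt χ l ψ)
  | φ, _, _ => φ

/-- The equivalence relation `∼_λ` induced on `Occ(K)` by an LP_m interpretation: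
its classes are `Occ(p,K)` for `|λ(p)| = 1` and `PosOcc(p,K)`, `NegOcc(p,K)` for
`λ(p) = {0,1}`. -/
def lamRel (K : PB) (lam : ℕ → Set Bool) : Rel :=
  {q | ∃ p pol pol', IsOccOf K q.1 p pol ∧ IsOccOf K q.2 p pol' ∧
    (lam p = Set.univ → pol = pol')}

open scoped Classical in
/-- The o-interpretation `μ_λ^K` associated with an LP_m interpretation `λ`. -/
noncomputable def muOf (lam : ℕ → Set Bool) (o : Occurrence) : Bool :=
  match occAt o.1 o.2 true with
  | some (p, pol) =>
      if lam p = ({false} : Set Bool) then false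
      else if lam p = ({true} : Set Bool) then true
      else pol
  | none => false

lemma lpEval_nonempty (lam : ℕ → Set Bool) (h : IsLPInterp lam) (φ : Form) :
    (lpEval lam φ).Nonempty := by
  induction φ with
  | var p => exact h p
  | neg ψ ih => exact ih.image _
  | conj ψ χ ih1 ih2 => exact ih1.image2 ih2

lemma isLPInterp_update (lam : ℕ → Set Bool) (h : IsLPInterp lam) (rv : ℕ) (x : Bool) :
    IsLPInterp (Function.update lam rv ({x} : Set Bool)) := by
  intro q
  by_cases hq : q = rv
  · subst hq; simp
  · rw [Function.update_of_ne hq]; exact h q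

lemma lpEval_update_eq (lam : ℕ → Set Bool) (rv : ℕ) (V : Set Bool) (φ : Form)
    (h : rv ∉ vars φ) :
    lpEval (Function.update lam rv V) φ = lpEval lam φ := by
  induction φ with
  | var q =>
      simp only [vars, Finset.mem_singleton] at h
      simp [lpEval, Function.update_of_ne (Ne.symm h)]
  | neg ψ ih =>
      simp only [vars] at h
      simp [lpEval, ih h]
  | conj ψ χ ih1 ih2 =>
      simp only [vars, Finset.mem_union, not_or] at h
      simp [lpEval, ih1 h.1, ih2 h.2]

lemma lp_replace_main (lam : ℕ → Set Bool) (hlam : IsLPInterp lam) (rv : ℕ) :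
    ∀ (φ : Form) (l : List Step) (pol0 : Bool) (p : ℕ) (pol : Bool) (b : Bool),
      rv ∉ vars φ → occAt φ l pol0 = some (p, pol) → b ∈ lpEval lam φ →
      b ∈ lpEval (Function.update lam rv ({(pol0 == (pol == b))} : Set Bool))
          (replaceAt φ l (Form.var rv)) := by
  intro φ
  induction φ with
  | var q =>
      intro l pol0 p pol b hrv hocc hb
      cases l with
      | nil =>
          simp only [occAt, Option.some.injEq, Prod.mk.injEq] at hocc
          obtain ⟨hp, hpol⟩ := hocc
          subst hpol
          simp only [replaceAt, lpEval, Function.update_self]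
          cases pol0 <;> cases b <;> simp
      | cons s l' => cases s <;> simp [occAt] at hocc
  | neg ψ ih =>
      intro l pol0 p pol b hrv hocc hb
      cases l with
      | nil => simp [occAt] at hocc
      | cons s l' =>
          cases s with
          | neg =>
              simp only [occAt] at hocc
              obtain ⟨v, hv, hvb⟩ := hb
              replace hvb : (!v) = b := hvb
              have hveq : v = !b := by rw [← hvb, Bool.not_not]
              subst hveq
              have hmem := ih l' (!pol0) p pol (!b) hrv hocc hv
              have hV : ((!pol0) == (pol == !b)) = (pol0 == (pol == b)) := by
                cases pol0 <;> cases pol <;> cases b <;> rfl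
              rw [hV] at hmem
              exact ⟨!b, hmem, by simp⟩
          | left => simp [occAt] at hocc
          | right => simp [occAt] at hocc
  | conj ψ χ ih1 ih2 =>
      intro l pol0 p pol b hrv hocc hb
      simp only [vars, Finset.mem_union, not_or] at hrv
      cases l with
      | nil => simp [occAt] at hocc
      | cons s l' =>
          cases s with
          | neg => simp [occAt] at hocc
          | left =>
              simp only [occAt] at hocc
              obtain ⟨v, hv, v', hv', hvv⟩ := hb
              replace hvv : (v && v') = b := hvv
              simp only [replaceAt, lpEval]
              rw [lpEval_update_eq lam rv _ χ hrv.2]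
              cases b with
              | true =>
                  rw [Bool.and_eq_true] at hvv
                  obtain ⟨h1, h2⟩ := hvv; subst h1; subst h2
                  exact ⟨true, ih1 l' pol0 p pol true hrv.1 hocc hv, true, hv', rfl⟩
              | false =>
                  cases v with
                  | false =>
                      exact ⟨false, ih1 l' pol0 p pol false hrv.1 hocc hv, v', hv',
                        by simp⟩
                  | true =>
                      simp only [Bool.true_and] at hvv
                      subst hvv
                      obtain ⟨w, hw⟩ := lpEval_nonempty _
                        (isLPInterp_update lam hlam rv _)
                        (replaceAt ψ l' (Form.var rv))
                      exact ⟨w, hw, false, hv', by simp⟩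
          | right =>
              simp only [occAt] at hocc
              obtain ⟨v, hv, v', hv', hvv⟩ := hb
              replace hvv : (v && v') = b := hvv
              simp only [replaceAt, lpEval]
              rw [lpEval_update_eq lam rv _ ψ hrv.1]
              cases b with
              | true =>
                  rw [Bool.and_eq_true] at hvv
                  obtain ⟨h1, h2⟩ := hvv; subst h1; subst h2
                  exact ⟨true, hv, true, ih2 l' pol0 p pol true hrv.2 hocc hv', rfl⟩
              | false =>
                  cases v' with
                  | false =>
                      exact ⟨v, hv, false, ih2 l' pol0 p pol false hrv.2 hocc hv',
                        by simp⟩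
                  | true =>
                      simp only [Bool.and_true] at hvv
                      subst hvv
                      obtain ⟨w, hw⟩ := lpEval_nonempty _
                        (isLPInterp_update lam hlam rv _)
                        (replaceAt χ l' (Form.var rv))
                      exact ⟨false, hv, w, hw, by simp⟩

end Occ
/-- Proposition 10: replacing a single occurrence `o` of `φ` by a
fresh variable `r` preserves LP_m truth values as indicated, according to the
polarity of `o`. -/
theorem lp_replace_occurrence (φ : Occ.Form) (lam : ℕ → Set Bool)
    (hlam : Occ.IsLPInterp lam) (rv : ℕ) (hrv : rv ∉ Occ.vars φ)
    (l : List Occ.Step) (p : ℕ) (pol : Bool)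
    (hocc : Occ.occAt φ l true = some (p, pol)) :
    (pol = true → true ∈ Occ.lpEval lam φ →
      true ∈ Occ.lpEval (Function.update lam rv ({true} : Set Bool))
        (Occ.replaceAt φ l (Occ.Form.var rv))) ∧
    (pol = false → false ∈ Occ.lpEval lam φ →
      false ∈ Occ.lpEval (Function.update lam rv ({true} : Set Bool))
        (Occ.replaceAt φ l (Occ.Form.var rv))) ∧
    (pol = false → true ∈ Occ.lpEval lam φ →
      true ∈ Occ.lpEval (Function.update lam rv ({false} : Set Bool))
        (Occ.replaceAt φ l (Occ.Form.var rv))) ∧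
    (pol = true → false ∈ Occ.lpEval lam φ →
      false ∈ Occ.lpEval (Function.update lam rv ({false} : Set Bool))
        (Occ.replaceAt φ l (Occ.Form.var rv))) := by
  have main := Occ.lp_replace_main lam hlam rv φ l true p pol
  refine ⟨fun hp hb => ?_, fun hp hb => ?_, fun hp hb => ?_, fun hp hb => ?_⟩ <;>
    subst hp <;> simpa using main _ hrv hocc hb
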